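/- In ℂ[[t]] the following identity of formal power series holds: 1 + Σ_{n≥1} ( (1/2)·binom(2n,n) + n + 1 − 2ⁿ ) · tⁿ/n! = (1/2)·e^{2t}·( (1+t)·Σ_{k≥0} t^{2k}/(k!)² − Σ_{k≥0} t^{2k+1}/(k!·(k+1)!) − t·Σ_{k≥0} t^{2k+2}/(k!·(k+2)!) ) + 1/2 + (1+t)·e^{t} − e^{2t}. (The left-hand side is the exponential codimension series of E⊗E, the tensor square of the Grassmann algebra, whose codimensions are c₀(E⊗E) = 1 and c_n(E⊗E) = (1/2)binom(2n,n) + n + 1 − 2ⁿ for n ≥ 1; the three inner series are I₀(2t), I₁(2t) and I₂(2t), where I_ν denotes the modified Bessel function of the first kind.) -/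

import Mathlib

/-!
The Bessel recurrence `I₀(2t) − I₂(2t) = I₁(2t)/t` collapses the bracket to `I₀(2t)`.
A product of exponential generating functions convolves coefficients binomially, so the
`n`-th coefficient of `e^(2t)·I₀(2t)` is `∑ⱼ binom(n,j)·2^(n-j)·binom(j,j/2)` over even `j`;
this is `binom(2n,n)`, the coefficient of `xⁿ` in `(2x + (1 + x²))ⁿ = (1 + x)^(2n)`.
What remains is a coefficientwise check against `1/2 + (1+t)eᵗ − e^(2t)`.
-/

/-- The formal exponential series `e^(βt) = ∑ βⁿ tⁿ/n!`. -/
noncomputable def expPS (β : ℂ) : PowerSeries ℂ :=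
  PowerSeries.mk fun n => β ^ n / n.factorial

/-- The series `∑_{k≥0} t^(2k)/(k!)²`, i.e. `I₀(2t)` where `I₀` is the modified
Bessel function of the first kind. -/
noncomputable def besselZero : PowerSeries ℂ :=
  PowerSeries.mk fun n =>
    if n % 2 = 0 then 1 / ((n / 2).factorial * (n / 2).factorial) else 0

/-- The series `∑_{k≥0} t^(2k+1)/(k!·(k+1)!)`, i.e. `I₁(2t)`. -/
noncomputable def besselOne : PowerSeries ℂ :=
  PowerSeries.mk fun n =>
    if n % 2 = 1 then 1 / (((n - 1) / 2).factorial * (((n - 1) / 2) + 1).factorial) else 0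

/-- The series `∑_{k≥0} t^(2k+2)/(k!·(k+2)!)`, i.e. `I₂(2t)`. -/
noncomputable def besselTwo : PowerSeries ℂ :=
  PowerSeries.mk fun n =>
    if 2 ≤ n ∧ n % 2 = 0 then
      1 / (((n - 2) / 2).factorial * (((n - 2) / 2) + 2).factorial) else 0

open Finset

open Polynomial in
theorem Nat.choose_two_mul_self_eq_sum (n : ℕ) :
    (2 * n).choose n = ∑ p ∈ antidiagonal n,
      n.choose p.1 * 2 ^ p.1 * if 2 ∣ p.2 then p.2.choose (p.2 / 2) else 0 := by
  have hsq : ((1 + X) ^ 2 : ℕ[X]) = C 2 * X + expand ℕ 2 (1 + X) := by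
    simp only [map_add, map_one, expand_X, map_ofNat]; ring
  have h := congrArg (coeff · n) (show ((1 + X) ^ (2 * n) : ℕ[X]) = _ by
    rw [pow_mul, hsq, (Commute.all _ _).add_pow'])
  simp only [coeff_one_add_X_pow, finsetSum_coeff, Nat.cast_id] at h
  refine h.trans (sum_congr rfl fun ⟨i, j⟩ hij => ?_)
  obtain rfl : i + j = n := HasAntidiagonal.mem_antidiagonal.mp hij
  rw [coeff_smul, mul_pow, ← C_pow, mul_assoc, coeff_C_mul, coeff_X_pow_mul', if_pos le_self_add,
    Nat.add_sub_cancel_left, ← map_pow, coeff_expand two_pos, coeff_one_add_X_pow, smul_eq_mul,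
    mul_assoc, Nat.cast_id]

open PowerSeries

theorem PowerSeries.mk_div_factorial_mul_mk_div_factorial {K : Type*} [Field K] [CharZero K]
    (a b : ℕ → K) :
    (mk fun n => a n / n.factorial) * (mk fun n => b n / n.factorial) =
      mk fun n => (∑ p ∈ antidiagonal n, n.choose p.1 * a p.1 * b p.2) / n.factorial := by
  ext n
  rw [coeff_mul, coeff_mk, sum_div]
  refine sum_congr rfl fun ⟨i, j⟩ hij => ?_
  obtain rfl : i + j = n := HasAntidiagonal.mem_antidiagonal.mp hij
  have hc : ((i + j).choose j : K) ≠ 0 := Nat.cast_ne_zero.mpr (Nat.choose_pos le_add_self).ne'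
  rw [coeff_mk, coeff_mk, ← Nat.add_choose_mul_factorial_mul_factorial, Nat.choose_symm_add]
  push_cast
  field_simp

theorem besselZero_eq_mk :
    besselZero = mk fun n => (if 2 ∣ n then (n.choose (n / 2) : ℂ) else 0) / n.factorial := by
  ext n
  simp only [besselZero, coeff_mk, ← Nat.dvd_iff_mod_eq_zero]
  split_ifs with h
  · obtain ⟨k, rfl⟩ := h
    have hc : ((k + k).choose k : ℂ) ≠ 0 := Nat.cast_ne_zero.mpr (Nat.choose_pos le_add_self).ne'
    rw [Nat.mul_div_cancel_left k two_pos, two_mul, ← Nat.add_choose_mul_factorial_mul_factorial]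
    push_cast
    field_simp
  · rw [zero_div]

theorem expPS_two_mul_besselZero :
    expPS 2 * besselZero = mk fun n => ((2 * n).choose n : ℂ) / n.factorial := by
  rw [expPS, besselZero_eq_mk, mk_div_factorial_mul_mk_div_factorial]
  ext n
  rw [coeff_mk, coeff_mk, Nat.choose_two_mul_self_eq_sum]
  push_cast
  rfl

theorem X_mul_besselZero : X * besselZero = besselOne + X * besselTwo := by
  ext n
  rcases n with _ | n
  · simp [besselOne]
  rw [map_add, coeff_succ_X_mul, coeff_succ_X_mul]
  simp only [besselZero, besselOne, besselTwo, coeff_mk]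
  rcases Nat.even_or_odd' n with ⟨k, rfl | rfl⟩
  · rcases k with _ | k
    · simp
    have hf := Nat.factorial_succ (k + 1)
    have hf' := Nat.factorial_succ k
    simp only [Nat.mul_mod_right, show (2 * (k + 1) + 1) % 2 = 1 by omega, Nat.add_sub_cancel,
      Nat.mul_div_cancel_left _ two_pos, show 2 * (k + 1) - 2 = 2 * k by omega, if_true, true_and,
      show 2 ≤ 2 * (k + 1) by omega]
    have hk₁ : (k : ℂ) + 1 ≠ 0 := Nat.cast_add_one_ne_zero k
    have hk₂ : (k : ℂ) + 1 + 1 ≠ 0 := by exact_mod_cast Nat.succ_ne_zero (k + 1)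
    push_cast [hf, hf']
    field_simp
    ring
  · simp [show (2 * k + 1) % 2 = 1 by omega, show (2 * k + 1 + 1) % 2 = 0 by omega]

theorem one_add_X_mul_expPS_one :
    (1 + X) * expPS 1 = mk fun n => ((n : ℂ) + 1) / n.factorial := by
  ext n
  rw [add_mul, one_mul, map_add, coeff_mk]
  rcases n with _ | n
  · simp [expPS]
  rw [coeff_succ_X_mul]
  simp only [expPS, coeff_mk, one_pow, Nat.factorial_succ]
  have hn : (n : ℂ) + 1 ≠ 0 := Nat.cast_add_one_ne_zero n
  push_cast
  field_simp
  ring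

/-- The exponential codimension series of `E ⊗ E`:
`1 + ∑_{n≥1} ((1/2)·binom(2n,n) + n + 1 − 2ⁿ)·tⁿ/n!
  = (1/2)·e^(2t)·((1+t)·I₀(2t) − I₁(2t) − t·I₂(2t)) + 1/2 + (1+t)·eᵗ − e^(2t)`. -/
theorem expCodimSeries_EtensorE :
    (PowerSeries.mk fun n =>
        if n = 0 then (1 : ℂ)
        else ((1 / 2) * (((2 * n).choose n : ℕ) : ℂ) + (n : ℂ) + 1 - 2 ^ n)
          / n.factorial) =
      PowerSeries.C (R := ℂ) (1 / 2) * expPS 2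
          * ((1 + PowerSeries.X) * besselZero - besselOne - PowerSeries.X * besselTwo)
        + PowerSeries.C (R := ℂ) (1 / 2) + (1 + PowerSeries.X) * expPS 1 - expPS 2 := by
  have hBessel : (1 + X) * besselZero - besselOne - X * besselTwo = besselZero := by
    rw [add_mul, one_mul, X_mul_besselZero]
    ring
  rw [hBessel, mul_assoc, expPS_two_mul_besselZero, one_add_X_mul_expPS_one]
  ext n
  simp only [expPS, map_add, map_sub, coeff_C_mul, coeff_C, coeff_mk]
  rcases n with _ | n
  · norm_num
  · simp only [n.succ_ne_zero, if_false]
    ring
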